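/- arXiv:1007.0906 — 8 statements merged into one kernel-verified Lean document; each statement's English description precedes it below -/
import Mathlib

section
/- Let 𝒜 be a commutative matrix *-algebra of n×n complex matrices, and let V ⊆ ℂⁿ be a linear subspace that is 𝒜-invariant, i.e. A·v ∈ V for every A ∈ 𝒜 and v ∈ V. Then V has an orthonormal basis (with respect to the standard inner product on ℂⁿ) consisting of common eigenvectors of 𝒜: each basis vector v satisfies that for every A ∈ 𝒜 there exists λ ∈ ℂ with A·v = λ·v. -/
/-!
The Hermitian members of `𝒜` form a commuting family of symmetric operators preserving `V`,
so their restrictions to `V` are simultaneously diagonalisable in an orthonormal basis.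
Every `M ∈ 𝒜` is `H + i K` with `H = (M + Mᴴ)/2` and `K = (M - Mᴴ)/(2i)` Hermitian members
of `𝒜`, so a common eigenvector of the Hermitian members is one of `M`.
-/

open Matrix

namespace LinearMap.IsSymmetric

open Module Module.End

variable {𝕜 E ι : Type*} [RCLike 𝕜] [NormedAddCommGroup E] [InnerProductSpace 𝕜 E]
  {T : ι → E →ₗ[𝕜] E}

theorem exists_orthonormalBasis_eigenvectors_of_commute [FiniteDimensional 𝕜 E]
    (hT : ∀ i, (T i).IsSymmetric) (hC : Pairwise (Function.onFun Commute T)) :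
    ∃ b : OrthonormalBasis (Fin (finrank 𝕜 E)) 𝕜 E,
      ∀ j i, ∃ μ : 𝕜, T i (b j) = μ • b j := by
  classical
  let W : (ι → 𝕜) → Submodule 𝕜 E := fun χ ↦ ⨅ i, eigenspace (T i) (χ i)
  have hW : DirectSum.IsInternal W := directSum_isInternal_of_pairwise_commute hT hC
  let _ : Fintype {χ // W χ ≠ ⊥} := hW.submodule_iSupIndep.fintypeNeBotOfFiniteDimensional
  have hW' := DirectSum.isInternal_ne_bot_iff.mpr hW
  have horth := (orthogonalFamily_iInf_eigenspaces hT).comp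
    (Subtype.val_injective (p := fun χ ↦ W χ ≠ ⊥))
  refine ⟨hW'.subordinateOrthonormalBasis rfl horth, fun j i ↦
    ⟨(hW'.subordinateOrthonormalBasisIndex rfl j horth).1 i, mem_eigenspace_iff.mp ?_⟩⟩
  exact (Submodule.mem_iInf _).mp (hW'.subordinateOrthonormalBasis_subordinate rfl j horth) i

theorem exists_orthonormalBasis_eigenvectors_of_commute_of_invariant
    (hT : ∀ i, (T i).IsSymmetric) (hC : Pairwise (Function.onFun Commute T))
    (V : Submodule 𝕜 E) [FiniteDimensional 𝕜 V] (hV : ∀ i, ∀ v ∈ V, T i v ∈ V) :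
    ∃ b : OrthonormalBasis (Fin (finrank 𝕜 V)) 𝕜 V,
      ∀ j i, ∃ μ : 𝕜, T i (b j) = μ • (b j : E) := by
  obtain ⟨b, hb⟩ := exists_orthonormalBasis_eigenvectors_of_commute
    (fun i ↦ (hT i).restrict_invariant (hV i))
    (fun i j hij ↦ LinearMap.restrict_commute (hC hij) (hV i) (hV j))
  exact ⟨b, fun j i ↦ (hb j i).imp fun μ hμ ↦ congrArg Subtype.val hμ⟩

end LinearMap.IsSymmetric

open ComplexStarModule in
theorem exists_isSelfAdjoint_add_I_smul_of_mem {R : Type*} [AddCommGroup R]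
    [StarAddMonoid R] [Module ℂ R] [StarModule ℂ R] {S : Set R}
    (hadd : ∀ x ∈ S, ∀ y ∈ S, x + y ∈ S) (hsmul : ∀ c : ℂ, ∀ x ∈ S, c • x ∈ S)
    (hstar : ∀ x ∈ S, star x ∈ S) {x : R} (hx : x ∈ S) :
    ∃ a ∈ S, ∃ b ∈ S, IsSelfAdjoint a ∧ IsSelfAdjoint b ∧ x = a + Complex.I • b := by
  have hsub : x - star x ∈ S := by
    rw [sub_eq_add_neg, ← neg_one_smul ℂ (star x)]
    exact hadd _ hx _ (hsmul _ _ (hstar _ hx))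
  refine ⟨ℜ x, ?_, ℑ x, ?_, (ℜ x).2, (ℑ x).2,
    (realPart_add_I_smul_imaginaryPart x).symm⟩
  · rw [realPart_apply_coe, ← Complex.coe_smul]
    exact hsmul _ _ (hadd _ hx _ (hstar _ hx))
  · rw [imaginaryPart_apply_coe, ← Complex.coe_smul]
    exact hsmul _ _ (hsmul _ _ hsub)

theorem statement1_general (n : ℕ) (A : Set (Matrix (Fin n) (Fin n) ℂ))
    (hadd : ∀ M ∈ A, ∀ N ∈ A, M + N ∈ A)
    (hsmul : ∀ (c : ℂ), ∀ M ∈ A, c • M ∈ A)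
    (hstar : ∀ M ∈ A, Mᴴ ∈ A)
    (hcomm : ∀ M ∈ A, ∀ N ∈ A, M * N = N * M)
    (V : Submodule ℂ (EuclideanSpace ℂ (Fin n)))
    (hinv : ∀ M ∈ A, ∀ v ∈ V, WithLp.toLp 2 (M.mulVec v) ∈ V) :
    ∃ b : OrthonormalBasis (Fin (Module.finrank ℂ V)) ℂ V,
      ∀ i, ∀ M ∈ A, ∃ lam : ℂ,
        M.mulVec ((b i : V) : EuclideanSpace ℂ (Fin n))
          = lam • ((b i : V) : EuclideanSpace ℂ (Fin n)) := by
  let T (H : {H // H ∈ A ∧ IsSelfAdjoint H}) := toEuclideanLin H.1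
  obtain ⟨b, hb⟩ :=
    LinearMap.IsSymmetric.exists_orthonormalBasis_eigenvectors_of_commute_of_invariant (T := T)
      (fun H ↦ isSymmetric_toEuclideanLin_iff.mpr H.2.2)
      (fun H K _ ↦ Commute.map (hcomm H.1 H.2.1 K.1 K.2.1) (toLpLinAlgEquiv 2))
      V (fun H ↦ hinv H.1 H.2.1)
  refine ⟨b, fun j M hM ↦ ?_⟩
  obtain ⟨H, hH, K, hK, hHsa, hKsa, rfl⟩ :=
    exists_isSelfAdjoint_add_I_smul_of_mem hadd hsmul hstar hM
  obtain ⟨μ, hμ⟩ := hb j ⟨H, hH, hHsa⟩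
  obtain ⟨ν, hν⟩ := hb j ⟨K, hK, hKsa⟩
  refine ⟨μ + Complex.I * ν, ?_⟩
  replace hμ := congrArg WithLp.ofLp hμ
  replace hν := congrArg WithLp.ofLp hν
  simp only [T, ofLp_toLpLin, toLin'_apply, WithLp.ofLp_smul] at hμ hν
  rw [add_mulVec, smul_mulVec, hμ, hν, smul_smul, add_smul]

/-- given a commutative matrix *-algebra `𝒜 ⊆ ℂ^{n×n}` and an `𝒜`-invariant
subspace `V ⊆ ℂⁿ`, the subspace `V` has an orthonormal basis (for the standard inner
product on `ℂⁿ`) consisting of common eigenvectors of `𝒜`. -/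
theorem statement1 (n : ℕ) (A : Set (Matrix (Fin n) (Fin n) ℂ))
    (hne : A.Nonempty)
    (hadd : ∀ M ∈ A, ∀ N ∈ A, M + N ∈ A)
    (hsmul : ∀ (c : ℂ), ∀ M ∈ A, c • M ∈ A)
    (hmul : ∀ M ∈ A, ∀ N ∈ A, M * N ∈ A)
    (hstar : ∀ M ∈ A, Mᴴ ∈ A)
    (hcomm : ∀ M ∈ A, ∀ N ∈ A, M * N = N * M)
    (V : Submodule ℂ (EuclideanSpace ℂ (Fin n)))
    (hinv : ∀ M ∈ A, ∀ v ∈ V, WithLp.toLp 2 (M.mulVec v) ∈ V) :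
    ∃ b : OrthonormalBasis (Fin (Module.finrank ℂ V)) ℂ V,
      ∀ i, ∀ M ∈ A, ∃ lam : ℂ,
        M.mulVec ((b i : V) : EuclideanSpace ℂ (Fin n))
          = lam • ((b i : V) : EuclideanSpace ℂ (Fin n)) :=
  statement1_general n A hadd hsmul hstar hcomm V hinv
end

section
/- Let A be a symmetric real n×n matrix such that diag(A) = c·(A·𝟏) for some real number c, where 𝟏 is the all-one vector and diag(A) ∈ ℝⁿ is the vector of diagonal entries of A. Then the (n+1)×(n+1) block matrix R(A) := [[1, diag(A)ᵀ],[diag(A), A]] is positive semidefinite if and only if A is positive semidefinite and 𝟏ᵀA𝟏 ≥ (tr A)². -/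
/-!
By the Schur complement with respect to the `1` in the corner, `R(A)` is positive semidefinite
iff `(aᵀx)² ≤ xᵀAx` for all `x`, where `a = diag A`. If `A ⪰ 0` and `a = c·A𝟙`, then
`aᵀx = c·⟨𝟙, x⟩_A` for the semi-inner product `⟨x, y⟩_A = xᵀAy`, so Cauchy–Schwarz gives
`(aᵀx)² ≤ c²·(𝟙ᵀA𝟙)·xᵀAx`. Hence the whole family of inequalities reduces to `c²·𝟙ᵀA𝟙 ≤ 1`,
which is the case `x = 𝟙`, i.e. `(tr A)² = (aᵀ𝟙)² ≤ 𝟙ᵀA𝟙`.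
-/

open Matrix

/-- For a real `n×n` matrix `A` with diagonal vector `a = diag(A)`, the bordered matrix
`R(A) = [[1, aᵀ],[a, A]]`. -/
def Rmat {n : ℕ} (A : Matrix (Fin n) (Fin n) ℝ) :
    Matrix (Fin 1 ⊕ Fin n) (Fin 1 ⊕ Fin n) ℝ :=
  Matrix.fromBlocks
    (Matrix.of fun _ _ => (1 : ℝ))
    (Matrix.of fun _ j => A.diag j)
    (Matrix.of fun i _ => A.diag i)
    A

namespace Matrix

variable {ι : Type*} [Fintype ι]

theorem IsHermitian.dotProduct_mulVec_comm {A : Matrix ι ι ℝ} (hA : A.IsHermitian)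
    (x y : ι → ℝ) : x ⬝ᵥ A *ᵥ y = y ⬝ᵥ A *ᵥ x := by
  rw [dotProduct_mulVec, ← mulVec_transpose, ← conjTranspose_eq_transpose_of_trivial, hA.eq,
    dotProduct_comm]

theorem PosSemidef.dotProduct_mulVec_sq_le {A : Matrix ι ι ℝ} (hA : A.PosSemidef)
    (x y : ι → ℝ) : (x ⬝ᵥ A *ᵥ y) ^ 2 ≤ (x ⬝ᵥ A *ᵥ x) * (y ⬝ᵥ A *ᵥ y) := by
  have hquad : ∀ t : ℝ, 0 ≤ (y ⬝ᵥ A *ᵥ y) * (t * t) + 2 * (x ⬝ᵥ A *ᵥ y) * t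
      + x ⬝ᵥ A *ᵥ x := fun t => by
    have := hA.dotProduct_mulVec_nonneg (x + t • y)
    simp only [star_trivial, mulVec_add, mulVec_smul, dotProduct_add, add_dotProduct,
      dotProduct_smul, smul_dotProduct, smul_eq_mul, hA.isHermitian.dotProduct_mulVec_comm y x]
      at this
    linarith
  have hdisc := discrim_le_zero hquad
  rw [discrim] at hdisc
  nlinarith

theorem posSemidef_sub_vecMulVec_self_iff {A : Matrix ι ι ℝ} (a : ι → ℝ) :
    (A - vecMulVec a a).PosSemidef ↔ A.IsHermitian ∧ ∀ x, (a ⬝ᵥ x) ^ 2 ≤ x ⬝ᵥ A *ᵥ x := by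
  have hquad (x : ι → ℝ) : x ⬝ᵥ (A - vecMulVec a a) *ᵥ x = x ⬝ᵥ A *ᵥ x - (a ⬝ᵥ x) ^ 2 := by
    rw [sub_mulVec, dotProduct_sub, vecMulVec_mulVec, op_smul_eq_smul, dotProduct_smul,
      smul_eq_mul, dotProduct_comm x a, sq]
  have hherm : (vecMulVec a a).IsHermitian := by
    simpa using (posSemidef_vecMulVec_self_star a).isHermitian
  rw [posSemidef_iff_dotProduct_mulVec]
  simp only [star_trivial, hquad, sub_nonneg]
  exact and_congr ⟨fun h => by simpa using h.add hherm, fun h => h.sub hherm⟩ Iff.rfl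

theorem posSemidef_fromBlocks_one_replicateRow_iff (a : ι → ℝ) (A : Matrix ι ι ℝ) :
    (fromBlocks 1 (replicateRow (Fin 1) a) (replicateCol (Fin 1) a) A).PosSemidef ↔
      (A - vecMulVec a a).PosSemidef := by
  have : Invertible (1 : Matrix (Fin 1) (Fin 1) ℝ) := invertibleOne
  have hcol : replicateCol (Fin 1) a = (replicateRow (Fin 1) a)ᴴ := by
    rw [conjTranspose_replicateRow, star_trivial]
  rw [hcol, PosDef.fromBlocks₁₁ _ _ PosDef.one, inv_one, Matrix.mul_one, ← hcol,
    vecMulVec_eq (Fin 1)]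
  rfl

theorem PosSemidef.forall_sq_dotProduct_le_iff {A : Matrix ι ι ℝ} (hA : A.PosSemidef)
    {a v : ι → ℝ} {c : ℝ} (ha : a = c • A *ᵥ v) :
    (∀ x, (a ⬝ᵥ x) ^ 2 ≤ x ⬝ᵥ A *ᵥ x) ↔ (a ⬝ᵥ v) ^ 2 ≤ v ⬝ᵥ A *ᵥ v := by
  refine ⟨fun h => h v, fun hv x => ?_⟩
  have hdot (x : ι → ℝ) : a ⬝ᵥ x = c * (v ⬝ᵥ A *ᵥ x) := by
    rw [ha, smul_dotProduct, smul_eq_mul, dotProduct_comm, hA.isHermitian.dotProduct_mulVec_comm]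
  set S := v ⬝ᵥ A *ᵥ v
  have hS : 0 ≤ S := by simpa using hA.dotProduct_mulVec_nonneg v
  have hx : 0 ≤ x ⬝ᵥ A *ᵥ x := by simpa using hA.dotProduct_mulVec_nonneg x
  have hcS : c ^ 2 * S ≤ 1 := by
    rw [hdot] at hv
    rcases hS.eq_or_lt with h0 | hpos
    · simp [← h0]
    · nlinarith
  rw [hdot]
  calc (c * (v ⬝ᵥ A *ᵥ x)) ^ 2 ≤ c ^ 2 * (S * (x ⬝ᵥ A *ᵥ x)) := by
        rw [mul_pow]
        exact mul_le_mul_of_nonneg_left (hA.dotProduct_mulVec_sq_le v x) (sq_nonneg c)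
    _ = (c ^ 2 * S) * (x ⬝ᵥ A *ᵥ x) := by ring
    _ ≤ x ⬝ᵥ A *ᵥ x := mul_le_of_le_one_left hx hcS

end Matrix

theorem Rmat_eq_fromBlocks {n : ℕ} (A : Matrix (Fin n) (Fin n) ℝ) :
    Rmat A = fromBlocks 1 (replicateRow (Fin 1) A.diag) (replicateCol (Fin 1) A.diag) A := by
  rw [Rmat, ← replicateRow, ← replicateCol]
  congr
  ext i j
  obtain rfl := Subsingleton.elim i j
  simp

theorem posSemidef_Rmat_iff {n : ℕ} (A : Matrix (Fin n) (Fin n) ℝ) :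
    (Rmat A).PosSemidef ↔ A.IsHermitian ∧ ∀ x, (A.diag ⬝ᵥ x) ^ 2 ≤ x ⬝ᵥ A *ᵥ x := by
  rw [Rmat_eq_fromBlocks, posSemidef_fromBlocks_one_replicateRow_iff,
    posSemidef_sub_vecMulVec_self_iff]

theorem statement5_general (n : ℕ) (A : Matrix (Fin n) (Fin n) ℝ)
    (c : ℝ) (hdiag : A.diag = c • (A *ᵥ fun _ => (1 : ℝ))) :
    (Rmat A).PosSemidef ↔ A.PosSemidef ∧ (A.trace) ^ 2 ≤ ∑ i, ∑ j, A i j := by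
  have htrace : A.trace = A.diag ⬝ᵥ 1 := by simp [trace, dotProduct_one]
  have hsum : ∑ i, ∑ j, A i j = 1 ⬝ᵥ A *ᵥ 1 := by simp [mulVec, dotProduct_one, one_dotProduct]
  rw [posSemidef_Rmat_iff, htrace, hsum]
  constructor
  · rintro ⟨hA, h⟩
    exact ⟨.of_dotProduct_mulVec_nonneg hA fun x => by simpa using (sq_nonneg _).trans (h x), h 1⟩
  · rintro ⟨hA, h⟩
    exact ⟨hA.isHermitian, (hA.forall_sq_dotProduct_le_iff hdiag).2 h⟩

/-- if `A` is symmetric with `diag(A) = c·(A𝟙)` for some real `c`, then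
`R(A)` is positive semidefinite iff `A` is positive semidefinite and `𝟙ᵀA𝟙 ≥ (tr A)²`. -/
theorem statement5 (n : ℕ) (A : Matrix (Fin n) (Fin n) ℝ) (hsym : A.IsSymm)
    (c : ℝ) (hdiag : A.diag = c • (A *ᵥ fun _ => (1 : ℝ))) :
    (Rmat A).PosSemidef ↔ A.PosSemidef ∧ (A.trace) ^ 2 ≤ ∑ i, ∑ j, A i j :=
  statement5_general n A c hdiag
end

section
/- Let C be a set of symmetric real n×n matrices that is closed under multiplication by nonnegative scalars and such that for every entrywise-nonnegative vector x ∈ ℝⁿ and every A ∈ C, the matrix Diag(x)·A·Diag(x) belongs to C. If A attains the maximum of 𝟏ᵀB𝟏 over all positive semidefinite B ∈ C with tr B = 1, then diag(A) = c·(A·𝟏) for some real number c. -/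
/-! Optimality of `A` is homogeneous: `𝟏ᵀB𝟏 ≤ (𝟏ᵀA𝟏) · tr B` for every positive semidefinite
`B ∈ C`, since a trace-zero one vanishes. For `B = Diag(x) A Diag(x)` with `x = 𝟏 + t eᵢ`, `t ≥ -1`,
this is a quadratic inequality in `t` with equality at `t = 0`, so its linear coefficient vanishes:
`(A𝟏)ᵢ = (𝟏ᵀA𝟏) Aᵢᵢ`. Its quadratic coefficient then forces `𝟏ᵀA𝟏 ≥ tr A = 1`, and
`c = (𝟏ᵀA𝟏)⁻¹` works. -/

open Matrix Topology

lemma eq_zero_of_forall_mul_add_mul_sq_nonpos {α β : ℝ} {s : Set ℝ} (hs : s ∈ 𝓝 0)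
    (h : ∀ t ∈ s, α * t + β * t ^ 2 ≤ 0) : α = 0 := by
  have hmax : IsLocalMax (fun t => α * t + β * t ^ 2) 0 :=
    Filter.mem_of_superset hs fun t ht => by simpa using h t ht
  simpa using hmax.hasDerivAt_eq_zero
    (((hasDerivAt_id' 0).const_mul α).add ((hasDerivAt_pow 2 0).const_mul β))

namespace Matrix

variable {ι R : Type*}

lemma sum_sum_eq_one_dotProduct_mulVec_one [Fintype ι] [NonAssocSemiring R] (A : Matrix ι ι R) :
    ∑ j, ∑ k, A j k = 1 ⬝ᵥ A *ᵥ 1 := by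
  simp [dotProduct, mulVec]

lemma sum_sum_diagonal_mul_mul_diagonal [Fintype ι] [DecidableEq ι] [CommSemiring R]
    (x : ι → R) (A : Matrix ι ι R) :
    ∑ j, ∑ k, (diagonal x * A * diagonal x) j k = x ⬝ᵥ A *ᵥ x := by
  simp [dotProduct, mulVec, mul_diagonal, diagonal_mul, Finset.mul_sum, mul_comm, mul_left_comm]

lemma trace_diagonal_mul_mul_diagonal [Fintype ι] [DecidableEq ι] [CommSemiring R]
    (x : ι → R) (A : Matrix ι ι R) :
    (diagonal x * A * diagonal x).trace = (x * x) ⬝ᵥ A.diag := by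
  simp [trace, dotProduct, mul_diagonal, diagonal_mul, mul_comm, mul_left_comm]

lemma one_add_single_mul_self [DecidableEq ι] [CommRing R] (i : ι) (t : R) :
    (1 + Pi.single i t : ι → R) * (1 + Pi.single i t) =
      (1 + Pi.single i (2 * t + t ^ 2 : R) : ι → R) := by
  ext j
  rcases eq_or_ne j i with rfl | hj
  · simp only [Pi.mul_apply, Pi.add_apply, Pi.one_apply, Pi.single_eq_same]
    ring
  · simp [hj]

lemma IsSymm.one_add_single_dotProduct_mulVec [Fintype ι] [DecidableEq ι] [CommRing R]
    {A : Matrix ι ι R} (hA : A.IsSymm) (i : ι) (t : R) :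
    (1 + Pi.single i t) ⬝ᵥ A *ᵥ (1 + Pi.single i t) =
      1 ⬝ᵥ A *ᵥ 1 + 2 * t * (A *ᵥ 1) i + t ^ 2 * A i i := by
  have hcol : 1 ⬝ᵥ A *ᵥ Pi.single i t = t * (A *ᵥ 1) i := by
    rw [dotProduct_mulVec, ← mulVec_transpose, hA.eq, dotProduct_single, mul_comm]
  have hdiag : (A *ᵥ Pi.single i t) i = A i i * t := dotProduct_single _ _ _
  simp only [mulVec_add, add_dotProduct, dotProduct_add, hcol, single_dotProduct, hdiag]
  ring

end Matrix

section Maximizer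

variable {ι : Type*} [Fintype ι] {C : Set (Matrix ι ι ℝ)} {A : Matrix ι ι ℝ}

theorem sum_sum_le_mul_trace_of_maximizer (hcone : ∀ c : ℝ, 0 ≤ c → ∀ A ∈ C, c • A ∈ C)
    (hmax : ∀ B ∈ C, B.PosSemidef → B.trace = 1 → (∑ i, ∑ j, B i j) ≤ ∑ i, ∑ j, A i j)
    {B : Matrix ι ι ℝ} (hBC : B ∈ C) (hB : B.PosSemidef) :
    ∑ i, ∑ j, B i j ≤ (∑ i, ∑ j, A i j) * B.trace := by
  rcases hB.trace_nonneg.eq_or_lt with htr | htr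
  · simp [hB.trace_eq_zero_iff.1 htr.symm]
  · have hc : 0 ≤ B.trace⁻¹ := inv_nonneg.2 htr.le
    have h := hmax _ (hcone _ hc B hBC) (hB.smul hc)
      (by rw [trace_smul, smul_eq_mul, inv_mul_cancel₀ htr.ne'])
    simp only [Matrix.smul_apply, smul_eq_mul, ← Finset.mul_sum] at h
    rwa [inv_mul_le_iff₀ htr, mul_comm] at h

theorem mul_add_mul_sq_nonpos_of_maximizer [DecidableEq ι]
    (hcone : ∀ c : ℝ, 0 ≤ c → ∀ A ∈ C, c • A ∈ C)
    (hdiagcl : ∀ x : ι → ℝ, (∀ i, 0 ≤ x i) → ∀ A ∈ C, diagonal x * A * diagonal x ∈ C)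
    (hmax : ∀ B ∈ C, B.PosSemidef → B.trace = 1 → (∑ i, ∑ j, B i j) ≤ ∑ i, ∑ j, A i j)
    (hAC : A ∈ C) (hA : A.PosSemidef) (hAtr : A.trace = 1) (i : ι) {t : ℝ} (ht : -1 ≤ t) :
    2 * ((A *ᵥ 1) i - (1 ⬝ᵥ A *ᵥ 1) * A i i) * t + (1 - 1 ⬝ᵥ A *ᵥ 1) * A i i * t ^ 2 ≤ 0 := by
  set x : ι → ℝ := 1 + Pi.single i t
  have hx : ∀ j, 0 ≤ x j := fun j => by
    rcases eq_or_ne j i with rfl | hj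
    · simp only [x, Pi.add_apply, Pi.one_apply, Pi.single_eq_same]
      linarith
    · simp [x, hj]
  have h := sum_sum_le_mul_trace_of_maximizer hcone hmax (hdiagcl x hx A hAC)
    (by simpa using hA.mul_mul_conjTranspose_same (diagonal x))
  have htr : (1 : ι → ℝ) ⬝ᵥ A.diag = 1 := by rwa [one_dotProduct]
  rw [sum_sum_diagonal_mul_mul_diagonal, trace_diagonal_mul_mul_diagonal, one_add_single_mul_self,
    (isHermitian_iff_isSymm.1 hA.isHermitian).one_add_single_dotProduct_mulVec,
    sum_sum_eq_one_dotProduct_mulVec_one, add_dotProduct, single_dotProduct, htr] at h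
  simp only [diag_apply] at h
  linarith

end Maximizer

theorem statement7_general (n : ℕ) (C : Set (Matrix (Fin n) (Fin n) ℝ))
    (hcone : ∀ c : ℝ, 0 ≤ c → ∀ A ∈ C, c • A ∈ C)
    (hdiagcl : ∀ x : Fin n → ℝ, (∀ i, 0 ≤ x i) → ∀ A ∈ C,
      Matrix.diagonal x * A * Matrix.diagonal x ∈ C)
    (A : Matrix (Fin n) (Fin n) ℝ) (hAC : A ∈ C) (hApsd : A.PosSemidef)
    (hAtr : A.trace = 1)
    (hmax : ∀ B ∈ C, B.PosSemidef → B.trace = 1 → (∑ i, ∑ j, B i j) ≤ ∑ i, ∑ j, A i j) :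
    ∃ c : ℝ, A.diag = c • (A *ᵥ fun _ => (1 : ℝ)) := by
  have key := mul_add_mul_sq_nonpos_of_maximizer hcone hdiagcl hmax hAC hApsd hAtr
  set S := 1 ⬝ᵥ A *ᵥ 1
  have hrow : ∀ i, (A *ᵥ 1) i = S * A i i := fun i => by
    have := eq_zero_of_forall_mul_add_mul_sq_nonpos (Ici_mem_nhds (by norm_num : (-1 : ℝ) < 0))
      fun t ht => key i ht
    linarith
  have hS : 1 ≤ S := by
    have h : ∑ i, (1 - S) * A i i ≤ 0 :=
      Finset.sum_nonpos fun i _ => by simpa [hrow i] using key i (t := 1) (by norm_num)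
    rw [← Finset.mul_sum, show ∑ i, A i i = 1 from hAtr] at h
    linarith
  refine ⟨S⁻¹, funext fun i => ?_⟩
  simp only [diag_apply, Pi.smul_apply, smul_eq_mul, ← Pi.one_def, hrow i]
  field_simp

/-- let `C` be a set of symmetric real `n×n` matrices closed under nonnegative
scaling and under `A ↦ Diag(x)·A·Diag(x)` for entrywise-nonnegative `x`. If `A` attains the
maximum of `𝟙ᵀB𝟙` over positive semidefinite `B ∈ C` with `tr B = 1`, then
`diag(A) = c·(A𝟙)` for some real `c`. -/
theorem statement7 (n : ℕ) (C : Set (Matrix (Fin n) (Fin n) ℝ))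
    (hsymm : ∀ A ∈ C, A.IsSymm)
    (hcone : ∀ c : ℝ, 0 ≤ c → ∀ A ∈ C, c • A ∈ C)
    (hdiagcl : ∀ x : Fin n → ℝ, (∀ i, 0 ≤ x i) → ∀ A ∈ C,
      Matrix.diagonal x * A * Matrix.diagonal x ∈ C)
    (A : Matrix (Fin n) (Fin n) ℝ) (hAC : A ∈ C) (hApsd : A.PosSemidef)
    (hAtr : A.trace = 1)
    (hmax : ∀ B ∈ C, B.PosSemidef → B.trace = 1 → (∑ i, ∑ j, B i j) ≤ ∑ i, ∑ j, A i j) :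
    ∃ c : ℝ, A.diag = c • (A *ᵥ fun _ => (1 : ℝ)) :=
  statement7_general n C hcone hdiagcl A hAC hApsd hAtr hmax
end

section
/- Fix integers q ≥ 2 and n ≥ 1 and let words be maps from {1,…,n} to {0,…,q−1}. For words u,v,w define d(u,v,w) := (d(u,v), d(u,w), |{h : u_h ≠ v_h and u_h ≠ w_h}|, |{h : u_h ≠ v_h = w_h}|), where d denotes Hamming distance. Then for all words u, v, w, u', v', w': d(u,v,w) = d(u',v',w') if and only if there exist a permutation π of {1,…,n} and permutations g_1,…,g_n of the alphabet {0,…,q−1} such that the map σ sending a word x to the word whose h-th letter is g_h(x_{π(h)}) satisfies σ(u) = u', σ(v) = v' and σ(w) = w'. -/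
open Finset Equiv

section aux
variable {α : Type*} [DecidableEq α]

lemma two_point (a b c d : α) (hab : a ≠ b) (hcd : c ≠ d) :
    ∃ g : Equiv.Perm α, g a = c ∧ g b = d := by
  have hcs : c ≠ Equiv.swap a c b := fun h => hab (by simpa using congrArg (Equiv.swap a c) h)
  refine ⟨(Equiv.swap (Equiv.swap a c b) d) * Equiv.swap a c, ?_, ?_⟩
  · show Equiv.swap (Equiv.swap a c b) d (Equiv.swap a c a) = c
    rw [Equiv.swap_apply_left, Equiv.swap_apply_of_ne_of_ne hcs hcd]
  · show Equiv.swap (Equiv.swap a c b) d (Equiv.swap a c b) = d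
    exact Equiv.swap_apply_left _ _

lemma three_point (a b c d e f : α) (hab : a ≠ b) (hac : a ≠ c) (hbc : b ≠ c)
    (hde : d ≠ e) (hdf : d ≠ f) (hef : e ≠ f) :
    ∃ g : Equiv.Perm α, g a = d ∧ g b = e ∧ g c = f := by
  obtain ⟨g₀, h1, h2⟩ := two_point a b d e hab hde
  have hgd : g₀ c ≠ d := fun h => hac (g₀.injective (by rw [h1, h]))
  have hge : g₀ c ≠ e := fun h => hbc (g₀.injective (by rw [h2, h]))
  refine ⟨(Equiv.swap (g₀ c) f) * g₀, ?_, ?_, ?_⟩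
  · show Equiv.swap (g₀ c) f (g₀ a) = d
    rw [h1, Equiv.swap_apply_of_ne_of_ne (Ne.symm hgd) hdf]
  · show Equiv.swap (g₀ c) f (g₀ b) = e
    rw [h2, Equiv.swap_apply_of_ne_of_ne (Ne.symm hge) hef]
  · exact Equiv.swap_apply_left _ _

lemma triple_perm (a b c d e f : α)
    (h12 : a = b ↔ d = e) (h13 : a = c ↔ d = f) (h23 : b = c ↔ e = f) :
    ∃ g : Equiv.Perm α, g a = d ∧ g b = e ∧ g c = f := by
  by_cases hab : a = b
  · have hde : d = e := h12.1 hab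
    by_cases hac : a = c
    · -- all equal
      have hdf : d = f := h13.1 hac
      exact ⟨Equiv.swap a d, by rw [Equiv.swap_apply_left],
        by rw [← hab, ← hde, Equiv.swap_apply_left],
        by rw [← hac, ← hdf, Equiv.swap_apply_left]⟩
    · have hdf : d ≠ f := fun h => hac (h13.2 h)
      obtain ⟨g, hg1, hg2⟩ := two_point a c d f hac hdf
      exact ⟨g, hg1, by rw [← hab, ← hde, hg1], hg2⟩
  · have hde : d ≠ e := fun h => hab (h12.2 h)
    by_cases hbc : b = c
    · have hef : e = f := h23.1 hbc
      obtain ⟨g, hg1, hg2⟩ := two_point a b d e hab hde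
      exact ⟨g, hg1, hg2, by rw [← hbc, ← hef, hg2]⟩
    · have hef : e ≠ f := fun h => hbc (h23.2 h)
      by_cases hac : a = c
      · have hdf : d = f := h13.1 hac
        obtain ⟨g, hg1, hg2⟩ := two_point a b d e hab hde
        exact ⟨g, hg1, hg2, by rw [← hac, ← hdf, hg1]⟩
      · exact three_point a b c d e f hab hac hbc hde
          (fun h => hac (h13.2 h)) hef

end aux

lemma exists_perm_of_fiber_card_eq {n : ℕ} {T : Type*} [DecidableEq T] [Fintype T]
    (t t' : Fin n → T)
    (h : ∀ τ, (univ.filter fun h => t h = τ).card = (univ.filter fun h => t' h = τ).card) :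
    ∃ π : Equiv.Perm (Fin n), ∀ h, t (π h) = t' h := by
  have e : ∀ τ, {h // t' h = τ} ≃ {h // t h = τ} := fun τ =>
    Fintype.equivOfCardEq (by simp only [Fintype.card_subtype]; exact (h τ).symm)
  refine ⟨(Equiv.sigmaFiberEquiv t').symm.trans
    ((Equiv.sigmaCongrRight e).trans (Equiv.sigmaFiberEquiv t)), fun h => ?_⟩
  show t ((e (t' h)) ⟨h, rfl⟩).1 = t' h
  exact ((e (t' h)) ⟨h, rfl⟩).2

def tfun {n q : ℕ} (u v w : Fin n → Fin q) (h : Fin n) : Bool × Bool × Bool :=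
  (decide (u h = v h), decide (u h = w h), decide (v h = w h))

variable {n q : ℕ} (u v w : Fin n → Fin q)

lemma rels1 :
    (univ.filter fun h => tfun u v w h = (false, false, true)).card
      = (univ.filter fun h => u h ≠ v h ∧ v h = w h).card := by
  simp only [Finset.card_filter]
  refine Finset.sum_congr rfl fun h _ => ?_
  rcases eq_or_ne (u h) (v h) with h1|h1 <;> rcases eq_or_ne (u h) (w h) with h2|h2 <;>
    rcases eq_or_ne (v h) (w h) with h3|h3 <;> simp_all [tfun]

lemma rels2 :
    (univ.filter fun h => tfun u v w h = (false, false, false)).card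
      + (univ.filter fun h => u h ≠ v h ∧ v h = w h).card
      = (univ.filter fun h => u h ≠ v h ∧ u h ≠ w h).card := by
  simp only [Finset.card_filter, ← Finset.sum_add_distrib]
  refine Finset.sum_congr rfl fun h _ => ?_
  rcases eq_or_ne (u h) (v h) with h1|h1 <;> rcases eq_or_ne (u h) (w h) with h2|h2 <;>
    rcases eq_or_ne (v h) (w h) with h3|h3 <;> simp_all [tfun]

lemma rels3 :
    (univ.filter fun h => tfun u v w h = (false, true, false)).card
      + (univ.filter fun h => u h ≠ v h ∧ u h ≠ w h).card = hammingDist u v := by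
  show _ = (univ.filter fun h => u h ≠ v h).card
  simp only [Finset.card_filter, ← Finset.sum_add_distrib]
  refine Finset.sum_congr rfl fun h _ => ?_
  rcases eq_or_ne (u h) (v h) with h1|h1 <;> rcases eq_or_ne (u h) (w h) with h2|h2 <;>
    rcases eq_or_ne (v h) (w h) with h3|h3 <;> simp_all [tfun]

lemma rels4 :
    (univ.filter fun h => tfun u v w h = (true, false, false)).card
      + (univ.filter fun h => u h ≠ v h ∧ u h ≠ w h).card = hammingDist u w := by
  show _ = (univ.filter fun h => u h ≠ w h).card
  simp only [Finset.card_filter, ← Finset.sum_add_distrib]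
  refine Finset.sum_congr rfl fun h _ => ?_
  rcases eq_or_ne (u h) (v h) with h1|h1 <;> rcases eq_or_ne (u h) (w h) with h2|h2 <;>
    rcases eq_or_ne (v h) (w h) with h3|h3 <;> simp_all [tfun]

lemma rels5 :
    (univ.filter fun h => tfun u v w h = (true, true, true)).card
      + (univ.filter fun h => tfun u v w h = (true, false, false)).card
      + hammingDist u v = n := by
  show _ + (univ.filter fun h => u h ≠ v h).card = n
  have hn' : (univ : Finset (Fin n)).card = n := by simp
  conv_rhs => rw [← hn', Finset.card_eq_sum_ones]
  simp only [Finset.card_filter, ← Finset.sum_add_distrib]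
  refine Finset.sum_congr rfl fun h _ => ?_
  rcases eq_or_ne (u h) (v h) with h1|h1 <;> rcases eq_or_ne (u h) (w h) with h2|h2 <;>
    rcases eq_or_ne (v h) (w h) with h3|h3 <;> simp_all [tfun]

lemma rels6 (b1 b2 b3 : Bool) (himp : ¬ (b1 = true → b2 = true → b3 = true) ∨
    ¬ (b1 = true → b3 = true → b2 = true) ∨ ¬ (b2 = true → b3 = true → b1 = true)) :
    (univ.filter fun h => tfun u v w h = (b1, b2, b3)).card = 0 := by
  rw [Finset.card_eq_zero, Finset.filter_eq_empty_iff]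
  intro h _
  rcases eq_or_ne (u h) (v h) with h1|h1 <;> rcases eq_or_ne (u h) (w h) with h2|h2 <;>
    rcases eq_or_ne (v h) (w h) with h3|h3 <;> simp_all [tfun] <;>
    rcases himp with h|h|h <;> simp_all

/-- two ordered triples of words have the same invariant
`d(u,v,w) = (d(u,v), d(u,w), |{h : u_h ≠ v_h ∧ u_h ≠ w_h}|, |{h : u_h ≠ v_h = w_h}|)`
iff some automorphism of the Hamming space (a permutation `π` of the coordinates followed by
independent permutations `g_h` of the alphabet at each coordinate) maps `(u,v,w)` to
`(u',v',w')`. -/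
theorem statement9 (q n : ℕ) (hq : 2 ≤ q) (hn : 1 ≤ n)
    (u v w u' v' w' : Fin n → Fin q) :
    (hammingDist u v = hammingDist u' v' ∧
     hammingDist u w = hammingDist u' w' ∧
     (Finset.univ.filter fun h => u h ≠ v h ∧ u h ≠ w h).card
       = (Finset.univ.filter fun h => u' h ≠ v' h ∧ u' h ≠ w' h).card ∧
     (Finset.univ.filter fun h => u h ≠ v h ∧ v h = w h).card
       = (Finset.univ.filter fun h => u' h ≠ v' h ∧ v' h = w' h).card) ↔
    ∃ (π : Equiv.Perm (Fin n)) (g : Fin n → Equiv.Perm (Fin q)),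
      (fun h => g h (u (π h))) = u' ∧
      (fun h => g h (v (π h))) = v' ∧
      (fun h => g h (w (π h))) = w' := by
  constructor
  · rintro ⟨h1, h2, h3, h4⟩
    have r1 := rels1 u v w
    have r2 := rels2 u v w
    have r3 := rels3 u v w
    have r4 := rels4 u v w
    have r5 := rels5 u v w
    have r1' := rels1 u' v' w'
    have r2' := rels2 u' v' w'
    have r3' := rels3 u' v' w'
    have r4' := rels4 u' v' w'
    have r5' := rels5 u' v' w'
    have hfib : ∀ τ : Bool × Bool × Bool,
        (univ.filter fun h => tfun u v w h = τ).card
          = (univ.filter fun h => tfun u' v' w' h = τ).card := by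
      rintro ⟨b1, b2, b3⟩
      cases b1 <;> cases b2 <;> cases b3
      · omega
      · omega
      · omega
      · rw [rels6 u v w _ _ _ (by decide), rels6 u' v' w' _ _ _ (by decide)]
      · omega
      · rw [rels6 u v w _ _ _ (by decide), rels6 u' v' w' _ _ _ (by decide)]
      · rw [rels6 u v w _ _ _ (by decide), rels6 u' v' w' _ _ _ (by decide)]
      · omega
    obtain ⟨π, hπ⟩ := exists_perm_of_fiber_card_eq (tfun u v w) (tfun u' v' w') hfib
    have key : ∀ h, ∃ g : Equiv.Perm (Fin q),
        g (u (π h)) = u' h ∧ g (v (π h)) = v' h ∧ g (w (π h)) = w' h := by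
      intro h
      have ht := hπ h
      simp only [tfun, Prod.mk.injEq] at ht
      obtain ⟨e1, e2, e3⟩ := ht
      exact triple_perm _ _ _ _ _ _ (decide_eq_decide.1 e1) (decide_eq_decide.1 e2)
        (decide_eq_decide.1 e3)
    choose g hg1 hg2 hg3 using key
    exact ⟨π, g, funext hg1, funext hg2, funext hg3⟩
  · rintro ⟨π, g, rfl, rfl, rfl⟩
    refine ⟨?_, ?_, ?_, ?_⟩
    · refine Finset.card_equiv π.symm fun i => ?_
      simp [hammingDist]
    · refine Finset.card_equiv π.symm fun i => ?_
      simp [hammingDist]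
    · refine Finset.card_equiv π.symm fun i => ?_
      simp
    · refine Finset.card_equiv π.symm fun i => ?_
      simp
end

section
/- Fix an integer n ≥ 1 and consider real matrices with rows and columns indexed by all subsets of {1,…,n}. For 0 ≤ i ≤ n+1 let C_i be the matrix with (X,Y) entry 1 if |X| = i−1, |Y| = i and X ⊆ Y, and 0 otherwise (so C_0 = 0 and C_{n+1} = 0), and let E'_i be the diagonal matrix with (X,X) entry 1 if |X| = i and 0 otherwise. Then for every i with 0 ≤ i ≤ n: C_{i+1}·C_{i+1}ᵀ − C_iᵀ·C_i = (n−2i)·E'_i. -/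
/-!
For `|X| = |Y| = i`, the `(X, Y)` entry of `C_{i+1} C_{i+1}ᵀ` counts the common upper covers of
`X` and `Y` in the Boolean lattice of subsets, and that of `C_iᵀ C_i` their common lower covers;
all other entries vanish. On the diagonal these are the `n - i` sets `insert a X` and the `i` sets
`X.erase a`. Off the diagonal, a common upper cover of `X ≠ Y` can only be `X ∪ Y` and a common
lower cover only `X ∩ Y`, and in a (weakly) modular lattice `X, Y ⋖ X ⊔ Y` iff `X ⊓ Y ⋖ X, Y`,
so the two counts agree.
-/

open Matrix

/-- The matrix `C_i`, indexed by the subsets of `{1,…,n}`, with `(X,Y)` entry `1` iff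
`|X| = i − 1`, `|Y| = i` and `X ⊆ Y` (in particular `C_0 = 0` and `C_{n+1} = 0`). -/
def Cmat (n i : ℕ) : Matrix (Finset (Fin n)) (Finset (Fin n)) ℝ :=
  Matrix.of fun X Y => if X.card + 1 = i ∧ Y.card = i ∧ X ⊆ Y then 1 else 0

/-- The diagonal matrix `E'_i` with `(X,X)` entry `1` iff `|X| = i`. -/
def Emat (n i : ℕ) : Matrix (Finset (Fin n)) (Finset (Fin n)) ℝ :=
  Matrix.of fun X Y => if X = Y ∧ X.card = i then 1 else 0

section Lattice

variable {α : Type*} [Lattice α] {a b c : α}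

theorem CovBy.eq_sup_of_covBy (hab : a ≠ b) (ha : a ⋖ c) (hb : b ⋖ c) : c = a ⊔ b := by
  rcases ha.eq_or_eq le_sup_left (sup_le ha.le hb.le) with h | h
  · have hba : b ≤ a := h ▸ le_sup_right
    rcases hb.eq_or_eq hba ha.le with h' | h'
    · exact absurd h' hab
    · exact absurd h' ha.ne
  · exact h.symm

theorem CovBy.eq_inf_of_covBy (hab : a ≠ b) (ha : c ⋖ a) (hb : c ⋖ b) : c = a ⊓ b :=
  CovBy.eq_sup_of_covBy (α := αᵒᵈ) hab ha.toDual hb.toDual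

theorem setOf_covBy_and_covBy (hab : a ≠ b) :
    {c | a ⋖ c ∧ b ⋖ c} = {c | c = a ⊔ b ∧ a ⋖ a ⊔ b ∧ b ⋖ a ⊔ b} := by
  ext c
  constructor
  · rintro ⟨ha, hb⟩
    obtain rfl := CovBy.eq_sup_of_covBy hab ha hb
    exact ⟨rfl, ha, hb⟩
  · rintro ⟨rfl, h⟩
    exact h

theorem setOf_covBy_and_covBy' (hab : a ≠ b) :
    {c | c ⋖ a ∧ c ⋖ b} = {c | c = a ⊓ b ∧ a ⊓ b ⋖ a ∧ a ⊓ b ⋖ b} := by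
  ext c
  constructor
  · rintro ⟨ha, hb⟩
    obtain rfl := CovBy.eq_inf_of_covBy hab ha hb
    exact ⟨rfl, ha, hb⟩
  · rintro ⟨rfl, h⟩
    exact h

theorem ncard_setOf_covBy_and_covBy [IsWeakUpperModularLattice α] [IsWeakLowerModularLattice α]
    (hab : a ≠ b) : {c | a ⋖ c ∧ b ⋖ c}.ncard = {c | c ⋖ a ∧ c ⋖ b}.ncard := by
  have hcovers : a ⋖ a ⊔ b ∧ b ⋖ a ⊔ b ↔ a ⊓ b ⋖ a ∧ a ⊓ b ⋖ b :=
    ⟨fun h => ⟨inf_covBy_of_covBy_sup_of_covBy_sup_left h.1 h.2,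
        inf_covBy_of_covBy_sup_of_covBy_sup_right h.1 h.2⟩,
      fun h => ⟨covBy_sup_of_inf_covBy_of_inf_covBy_left h.1 h.2,
        covBy_sup_of_inf_covBy_of_inf_covBy_right h.1 h.2⟩⟩
  rw [setOf_covBy_and_covBy hab, setOf_covBy_and_covBy' hab]
  by_cases h : a ⋖ a ⊔ b ∧ b ⋖ a ⊔ b
  · simp [h, hcovers.1 h]
  · simp [h, mt hcovers.2 h]

end Lattice

namespace Finset

variable {α : Type*} {s t : Finset α}

theorem covBy_iff_subset_and_card_add_one_eq : s ⋖ t ↔ s ⊆ t ∧ s.card + 1 = t.card := by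
  classical
  rw [covBy_iff_card_sdiff_eq_one]
  refine and_congr_right fun hst => ?_
  have := card_le_card hst
  rw [card_sdiff_of_subset hst]
  omega

theorem ncard_setOf_covBy_eq_card (s : Finset α) : {t | t ⋖ s}.ncard = s.card := by
  classical
  have : {t | t ⋖ s} = s.erase '' s := by
    ext t
    simp [covBy_iff_exists_erase]
  rw [this, (erase_injOn s).ncard_image, Set.ncard_coe_finset]

theorem ncard_setOf_covBy_eq_card_compl [Fintype α] [DecidableEq α] (s : Finset α) :
    {t | s ⋖ t}.ncard = sᶜ.card := by
  have : {t | s ⋖ t} = (insert · s) '' (sᶜ : Finset α) := by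
    ext t
    simp [covBy_iff_exists_insert]
  have hinj : Set.InjOn (insert · s) (sᶜ : Finset α) := fun a ha _ _ hab =>
    (insert_inj (by simpa using ha)).1 hab
  rw [this, hinj.ncard_image, Set.ncard_coe_finset]

end Finset

theorem Cmat_mul_transpose_apply (n i : ℕ) (X Y : Finset (Fin n)) :
    (Cmat n i * (Cmat n i)ᵀ) X Y
      = if X.card + 1 = i ∧ Y.card + 1 = i then ({Z | X ⋖ Z ∧ Y ⋖ Z}.ncard : ℝ) else 0 := by
  simp only [mul_apply, transpose_apply, Cmat, of_apply, ite_mul, zero_mul, one_mul, ← ite_and]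
  rw [Finset.sum_boole, ← Set.ncard_coe_finset, Finset.coe_filter_univ]
  split_ifs with h
  · congr 2
    ext Z
    simp only [Set.mem_ofPred_eq, Finset.covBy_iff_subset_and_card_add_one_eq]
    grind
  · rw [Nat.cast_eq_zero, Set.ncard_eq_zero, Set.eq_empty_iff_forall_notMem]
    exact fun Z hZ => h ⟨hZ.1.1, hZ.2.1⟩

theorem transpose_Cmat_mul_apply (n i : ℕ) (X Y : Finset (Fin n)) :
    ((Cmat n i)ᵀ * Cmat n i) X Y
      = if X.card = i ∧ Y.card = i then ({Z | Z ⋖ X ∧ Z ⋖ Y}.ncard : ℝ) else 0 := by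
  simp only [mul_apply, transpose_apply, Cmat, of_apply, ite_mul, zero_mul, one_mul, ← ite_and]
  rw [Finset.sum_boole, ← Set.ncard_coe_finset, Finset.coe_filter_univ]
  split_ifs with h
  · congr 2
    ext Z
    simp only [Set.mem_ofPred_eq, Finset.covBy_iff_subset_and_card_add_one_eq]
    grind
  · rw [Nat.cast_eq_zero, Set.ncard_eq_zero, Set.eq_empty_iff_forall_notMem]
    exact fun Z hZ => h ⟨hZ.1.2.1, hZ.2.2.1⟩

theorem statement10_general (n : ℕ) (i : ℕ) (hi : i ≤ n) :
    Cmat n (i + 1) * (Cmat n (i + 1))ᵀ - (Cmat n i)ᵀ * Cmat n i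
      = ((n : ℝ) - 2 * (i : ℝ)) • Emat n i := by
  ext X Y
  rw [Matrix.sub_apply, Cmat_mul_transpose_apply, transpose_Cmat_mul_apply, Matrix.smul_apply,
    Emat, of_apply, smul_eq_mul]
  simp only [add_left_inj]
  by_cases hXY : X.card = i ∧ Y.card = i
  · obtain ⟨hX, hY⟩ := hXY
    rcases eq_or_ne X Y with rfl | hne
    · simp [hX, Finset.ncard_setOf_covBy_eq_card_compl, Finset.ncard_setOf_covBy_eq_card,
        Finset.card_compl, hi]
      ring
    · simp [hX, hY, hne, ncard_setOf_covBy_and_covBy hne]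
  · have hE : ¬(X = Y ∧ X.card = i) := by
      rintro ⟨rfl, hX⟩
      exact hXY ⟨hX, hX⟩
    simp [hXY, hE]

/-- for `0 ≤ i ≤ n`, `C_{i+1}·C_{i+1}ᵀ − C_iᵀ·C_i = (n − 2i)·E'_i`. -/
theorem statement10 (n : ℕ) (hn : 1 ≤ n) (i : ℕ) (hi : i ≤ n) :
    Cmat n (i + 1) * (Cmat n (i + 1))ᵀ - (Cmat n i)ᵀ * Cmat n i
      = ((n : ℝ) - 2 * (i : ℝ)) • Emat n i :=
  statement10_general n i hi
end

section
/- Fix an integer n ≥ 1 and for integers i, j, t let M_{i,j}^t be the real matrix, with rows and columns indexed by all subsets of {1,…,n}, whose (X,Y) entry is 1 if |X| = i, |Y| = j and |X∩Y| = t, and 0 otherwise. Then for all l, k, p ∈ {0,…,n}: M_{l,k}^p = Σ_{s=0}^{n} (−1)^{s−p} C(s,p) · M_{l,s}^s · M_{s,k}^s. -/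
/-!
The `(X, Y)` entry of `M_{l,s}^s * M_{s,k}^s` counts the `s`-subsets of `X ∩ Y`, so it is
`C(|X ∩ Y|, s)` when `|X| = l`, `|Y| = k` and `0` otherwise. Entrywise, the identity is therefore
binomial inversion, `∑ s, (-1)^(s-p) C(s, p) C(m, s) = [m = p]`, which follows from
`C(m, s) C(s, p) = C(m, p) C(m - p, s - p)` and the vanishing of alternating binomial sums.
-/

open Matrix

/-- The matrix `M_{i,j}^t`, indexed by the subsets of `{1,…,n}`, with `(X,Y)` entry `1` iff
`|X| = i`, `|Y| = j` and `|X ∩ Y| = t`. (Integer parameters, so that degenerate values such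
as `i = −1` give the zero matrix.) -/
def Mmat (n : ℕ) (i j t : ℤ) : Matrix (Finset (Fin n)) (Finset (Fin n)) ℝ :=
  Matrix.of fun X Y =>
    if (X.card : ℤ) = i ∧ (Y.card : ℤ) = j ∧ ((X ∩ Y).card : ℤ) = t then 1 else 0

open Finset

theorem Finset.card_inter_eq_card_right_iff {α : Type*} [DecidableEq α] {s t : Finset α} :
    #(s ∩ t) = #t ↔ t ⊆ s := by
  refine ⟨fun h ↦ ?_, fun h ↦ by rw [inter_eq_right.2 h]⟩
  rw [← inter_eq_right]
  exact eq_of_subset_of_card_le inter_subset_right h.ge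

theorem sum_range_neg_one_zpow_mul_choose_mul_choose {R : Type*} [Field R]
    {m p N : ℕ} (hm : m < N) :
    ∑ s ∈ range N, (-1 : R) ^ ((s : ℤ) - p) * s.choose p * m.choose s
      = if m = p then 1 else 0 := by
  rw [eventually_constant_sum (fun s hs ↦ by simp [Nat.choose_eq_zero_of_lt hs]) hm]
  rcases lt_or_ge m p with hmp | hpm
  · rw [if_neg hmp.ne, sum_eq_zero]
    intro s _
    rcases lt_or_ge s p with hsp | hps
    · simp [Nat.choose_eq_zero_of_lt hsp]
    · simp [Nat.choose_eq_zero_of_lt (hmp.trans_le hps)]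
  obtain ⟨d, rfl⟩ := Nat.exists_eq_add_of_le hpm
  have hterm : ∀ t,
      (-1 : R) ^ (((p + t : ℕ) : ℤ) - p) * (p + t).choose p * (p + d).choose (p + t)
        = (p + d).choose p * ((-1) ^ t * d.choose t) := by
    intro t
    have hchoose := Nat.choose_mul (n := p + d) (Nat.le_add_right p t)
    simp only [Nat.add_sub_cancel_left] at hchoose
    rw [Nat.cast_add, add_sub_cancel_left, zpow_natCast, mul_assoc, ← Nat.cast_mul,
      mul_comm ((p + t).choose p), hchoose]
    push_cast
    ring
  have halt : ∑ t ∈ range (d + 1), (-1 : R) ^ t * d.choose t = if d = 0 then 1 else 0 := by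
    exact_mod_cast congrArg (Int.cast : ℤ → R) (Int.alternating_sum_range_choose (n := d))
  rw [Nat.succ_eq_add_one, add_assoc, sum_range_add,
    sum_eq_zero fun s hs ↦ by simp [Nat.choose_eq_zero_of_lt (mem_range.1 hs)], zero_add]
  simp only [hterm, ← mul_sum, halt, Nat.add_eq_left]
  split_ifs with hd
  · simp [hd]
  · rw [mul_zero]

namespace Mmat

variable {n : ℕ}

theorem apply_natCast (l k p : ℕ) (X Y : Finset (Fin n)) :
    Mmat n l k p X Y = if #X = l ∧ #Y = k ∧ #(X ∩ Y) = p then 1 else 0 := by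
  simp only [Mmat, of_apply, Nat.cast_inj]

theorem apply_comm (i j t : ℤ) (X Y : Finset (Fin n)) :
    Mmat n i j t X Y = Mmat n j i t Y X := by
  simp only [Mmat, of_apply, inter_comm Y X]
  congr 1
  exact propext (by tauto)

theorem apply_self_right (i : ℤ) (s : ℕ) (X Z : Finset (Fin n)) :
    Mmat n i s s X Z = if (#X : ℤ) = i ∧ Z ∈ X.powersetCard s then 1 else 0 := by
  simp only [Mmat, of_apply, mem_powersetCard, Nat.cast_inj]
  congr 1
  exact propext
    ⟨fun ⟨hX, hZ, hXZ⟩ ↦ ⟨hX, card_inter_eq_card_right_iff.1 (hXZ.trans hZ.symm), hZ⟩,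
      fun ⟨hX, hZX, hZ⟩ ↦ ⟨hX, hZ, (card_inter_eq_card_right_iff.2 hZX).trans hZ⟩⟩

theorem mul_apply_self (l k s : ℕ) (X Y : Finset (Fin n)) :
    (Mmat n l s s * Mmat n s k s) X Y
      = if #X = l ∧ #Y = k then ((#(X ∩ Y)).choose s : ℝ) else 0 := by
  have hterm : ∀ Z, Mmat n l s s X Z * Mmat n s k s Z Y
      = if (#X = l ∧ #Y = k) ∧ Z ∈ (X ∩ Y).powersetCard s then 1 else 0 := by
    intro Z
    rw [apply_comm (s : ℤ), apply_self_right, apply_self_right, ite_zero_mul_ite_zero, one_mul]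
    simp only [mem_powersetCard, subset_inter_iff, Nat.cast_inj]
    congr 1
    exact propext (by tauto)
  rw [Matrix.mul_apply, sum_congr rfl fun Z _ ↦ hterm Z, sum_boole]
  split_ifs with h
  · simp only [h, true_and, filter_univ_mem, card_powersetCard]
  · simp only [h, false_and, filter_false, card_empty, Nat.cast_zero]

end Mmat

theorem statement12_general (n : ℕ) (l k p : ℕ) :
    Mmat n l k p
      = ∑ s ∈ Finset.range (n + 1),
          ((-1 : ℝ) ^ ((s : ℤ) - (p : ℤ)) * (s.choose p : ℝ)) •
            (Mmat n l s s * Mmat n s k s) := by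
  ext X Y
  have hXY : #(X ∩ Y) < n + 1 :=
    Nat.lt_succ_of_le ((card_le_univ _).trans_eq (Fintype.card_fin n))
  rw [Matrix.sum_apply]
  simp only [Matrix.smul_apply, Mmat.mul_apply_self, smul_eq_mul, mul_ite, mul_zero]
  rw [Mmat.apply_natCast]
  by_cases h : #X = l ∧ #Y = k
  · simp only [h, true_and, if_true]
    rw [sum_range_neg_one_zpow_mul_choose_mul_choose hXY]
  · rw [if_neg fun hXYp ↦ h ⟨hXYp.1, hXYp.2.1⟩]
    simp only [h, if_false, sum_const_zero]

/-- for all `l, k, p ∈ {0,…,n}`,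
`M_{l,k}^p = Σ_{s=0}^{n} (−1)^{s−p} C(s,p) · M_{l,s}^s · M_{s,k}^s`. -/
theorem statement12 (n : ℕ) (hn : 1 ≤ n) (l k p : ℕ) (hl : l ≤ n) (hk : k ≤ n)
    (hp : p ≤ n) :
    Mmat n l k p
      = ∑ s ∈ Finset.range (n + 1),
          ((-1 : ℝ) ^ ((s : ℤ) - (p : ℤ)) * (s.choose p : ℝ)) •
            (Mmat n l s s * Mmat n s k s) :=
  statement12_general n l k p
end

section
/- Fix an integer n ≥ 1. Let 𝒫 be the collection of subsets of {1,…,n}, for integers i,j,t let M_{i,j}^t be the real 𝒫×𝒫 matrix with (X,Y) entry 1 if |X| = i, |Y| = j, |X∩Y| = t and 0 otherwise, and for 0 ≤ k ≤ ⌊n/2⌋ let L_k := {b ∈ ℝ^{𝒫} : M_{k−1,k}^{k−1}·b = 0 and b_X = 0 whenever |X| ≠ k}. Then for all i, j, k, l ∈ {0,…,n} with k, l ≤ ⌊n/2⌋ and all c ∈ L_l, b ∈ L_k: cᵀ·M_{l,i}^l·M_{j,k}^k·b = C(n−2k, i−k)·(cᵀb) if l = k and i = j, and cᵀ·M_{l,i}^l·M_{j,k}^k·b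 = 0 otherwise. -/
/-! For `|X| = l` and `|Z| = k` the entry `(M_{l,i}^l M_{i,k}^k)_{X,Z}` counts the `i`-sets
containing `X ∪ Z`, so it is `C(n - |X ∪ Z|, i - |X ∪ Z|)`; as `|X ∪ Z| = l + k - |X ∩ Z|`,
Vandermonde's identity rewrites it as `∑_s C(|X ∩ Z|, s) C(n - l - k, i - l - k + s)`.
Counting `C(|X ∩ Z|, s)` as the number of `s`-sets `S ⊆ X ∩ Z` turns `cᵀ M M b` into
`∑_s C(n - l - k, i - l - k + s) ∑_{|S| = s} c↑(S) b↑(S)` with `b↑(S) = ∑_{Z ⊇ S} b_Z`.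
For `b ∈ L_k` the condition `M_{k-1,k}^{k-1} b = 0` says that `b↑` vanishes on `(k-1)`-sets;
since `b↑` summed over the one-point extensions of `S` is `(k - |S|) b↑(S)`, it vanishes on all
sets of size `< k`, while on `k`-sets it is `b` itself. Hence only `s = l = k` survives. -/

open Matrix

/-- Real-valued binomial coefficient `C(a,b)` of integers, equal to `0` whenever `b < 0` or
`b > a`. -/
noncomputable def zchoose (a b : ℤ) : ℝ :=
  if 0 ≤ b ∧ b ≤ a then ((a.toNat).choose b.toNat : ℝ) else 0

/-- The set `L_k = {b ∈ ℝ^𝒫 : M_{k−1,k}^{k−1}·b = 0, b_X = 0 whenever |X| ≠ k}`. -/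
def Lset (n k : ℕ) : Set (Finset (Fin n) → ℝ) :=
  {b | Mmat n ((k : ℤ) - 1) (k : ℤ) ((k : ℤ) - 1) *ᵥ b = 0 ∧
       ∀ X : Finset (Fin n), X.card ≠ k → b X = 0}

open Finset

lemma zchoose_natCast (a b : ℕ) : zchoose a b = a.choose b := by
  unfold zchoose
  split_ifs
  · simp
  · rw [Nat.choose_eq_zero_of_lt (by omega), Nat.cast_zero]

lemma zchoose_of_neg (a : ℤ) {b : ℤ} (hb : b < 0) : zchoose a b = 0 := if_neg (by omega)

lemma zchoose_succ_succ (a : ℕ) (r : ℤ) :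
    zchoose (a + 1) (r + 1) = zchoose a r + zchoose a (r + 1) := by
  rcases le_or_gt 0 r with hr | hr
  · lift r to ℕ using hr
    rw [← Nat.cast_one, ← Nat.cast_add, ← Nat.cast_add, zchoose_natCast, zchoose_natCast,
      zchoose_natCast, Nat.choose_succ_succ', Nat.cast_add]
  · obtain hr' | hr' := eq_or_lt_of_le (show r + 1 ≤ 0 by omega)
    · obtain rfl : r = -1 := by omega
      simp [zchoose]; omega
    · rw [zchoose_of_neg _ hr', zchoose_of_neg _ hr, zchoose_of_neg _ hr', add_zero]

theorem zchoose_add_add_eq_sum (a m : ℕ) (r : ℤ) :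
    zchoose (a + m) (r + m) = ∑ s ∈ range (m + 1), (m.choose s : ℝ) * zchoose a (r + s) := by
  induction m generalizing r with
  | zero => simp
  | succ m ih =>
    have hpascal := zchoose_succ_succ (a + m) (r + m)
    push_cast at hpascal ⊢
    rw [← add_assoc, ← add_assoc, hpascal, ih, show r + m + 1 = r + 1 + m by ring, ih,
      sum_range_succ' _ (m + 1), sum_range_succ' (fun s => (m.choose s : ℝ) * _)]
    simp only [Nat.choose_succ_succ', Nat.cast_add, add_mul, sum_add_distrib,
      sum_range_succ _ m, Nat.choose_succ_self, Nat.choose_zero_right]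
    push_cast
    ring_nf

section UpperSum

variable {α R : Type*} [Fintype α] [DecidableEq α]

def upperSum [AddCommMonoid R] (b : Finset α → R) (S : Finset α) : R := ∑ Z with S ⊆ Z, b Z

lemma sum_upperSum_insert [AddCommMonoid R] (b : Finset α → R) (S : Finset α) :
    ∑ x ∈ Sᶜ, upperSum b (insert x S) = ∑ Z with S ⊆ Z, #(Z \ S) • b Z := by
  simp only [upperSum, sum_filter]
  rw [sum_comm]
  refine sum_congr rfl fun Z _ => ?_
  split_ifs with hSZ
  · rw [← sum_filter, sum_const]
    congr 2
    ext x
    simp only [mem_filter, mem_compl, mem_sdiff, insert_subset_iff, hSZ, and_true]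
    tauto
  · exact sum_eq_zero fun x _ => if_neg fun h => hSZ ((subset_insert x S).trans h)

lemma card_filter_superset_card_eq (W : Finset α) (i : ℕ) :
    (#{Y | W ⊆ Y ∧ #Y = i} : ℝ) = zchoose (Fintype.card α - #W) (i - #W) := by
  by_cases hWi : #W ≤ i
  · have hWα := card_le_univ W
    have hfilter : ({Y | W ⊆ Y ∧ #Y = i} : Finset (Finset α)) =
        (univ.powersetCard i).filter (W ⊆ ·) := by
      ext Y
      simp [and_comm]
    rw [hfilter, card_filter_powersetCard_subset W univ i (subset_univ W) hWi, card_univ,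
      ← zchoose_natCast]
    congr 1 <;> omega
  · rw [zchoose_of_neg _ (by omega), Nat.cast_eq_zero, card_eq_zero, filter_eq_empty_iff]
    rintro Y - ⟨hWY, rfl⟩
    exact hWi (card_le_card hWY)

lemma sum_sum_mul_choose_card_inter [CommSemiring R] (f g : Finset α → R) (s : ℕ) :
    ∑ X, ∑ Z, f X * g Z * (#(X ∩ Z)).choose s =
      ∑ S with #S = s, upperSum f S * upperSum g S := by
  have hcount : ∀ X Z : Finset α, ((#(X ∩ Z)).choose s : R) =
      ∑ S with #S = s, if S ⊆ X ∧ S ⊆ Z then 1 else 0 := by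
    intro X Z
    rw [← card_powersetCard, sum_boole, filter_filter]
    congr 2
    ext S
    simp only [mem_powersetCard, subset_inter_iff, mem_filter, mem_univ, true_and]
    tauto
  simp only [upperSum, sum_mul_sum]
  simp only [hcount, mul_sum]
  rw [sum_congr rfl fun X _ => sum_comm, sum_comm]
  refine sum_congr rfl fun S _ => ?_
  simp only [sum_filter]
  refine sum_congr rfl fun X _ => ?_
  by_cases hX : S ⊆ X <;> simp [hX]

lemma sum_upperSum_insert_of_card_ne [CommRing R] {k : ℕ} {b : Finset α → R}
    (hb : ∀ Z, #Z ≠ k → b Z = 0) (S : Finset α) :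
    ∑ x ∈ Sᶜ, upperSum b (insert x S) = ((k : R) - #S) * upperSum b S := by
  rw [sum_upperSum_insert, upperSum, mul_sum]
  refine sum_congr rfl fun Z hZ => ?_
  obtain hZk | hZk := eq_or_ne #Z k
  · rw [card_sdiff_of_subset (mem_filter.mp hZ).2, nsmul_eq_mul,
      Nat.cast_sub (card_le_card (mem_filter.mp hZ).2), hZk]
  · rw [hb Z hZk, smul_zero, mul_zero]

variable [Field R] [CharZero R] {k : ℕ} {b : Finset α → R}

lemma upperSum_eq_zero_of_card_lt (hb : ∀ Z, #Z ≠ k → b Z = 0)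
    (hbelow : ∀ T, #T + 1 = k → upperSum b T = 0) {S : Finset α} (hS : #S < k) :
    upperSum b S = 0 := by
  obtain ⟨d, hd⟩ := Nat.exists_eq_add_of_lt hS
  induction d generalizing S with
  | zero => exact hbelow S hd.symm
  | succ d ih =>
    have hsum : ∑ x ∈ Sᶜ, upperSum b (insert x S) = 0 := sum_eq_zero fun x hx => by
      have hcard := card_insert_of_notMem (mem_compl.mp hx)
      exact ih (by omega) (by omega)
    rw [sum_upperSum_insert_of_card_ne hb] at hsum
    refine (mul_eq_zero.mp hsum).resolve_left (sub_ne_zero.mpr ?_)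
    exact_mod_cast hS.ne'

theorem upperSum_eq_ite (hb : ∀ Z, #Z ≠ k → b Z = 0)
    (hbelow : ∀ T, #T + 1 = k → upperSum b T = 0) (S : Finset α) :
    upperSum b S = if #S = k then b S else 0 := by
  split_ifs with hS
  · refine sum_eq_single_of_mem S (mem_filter.mpr ⟨mem_univ S, subset_rfl⟩) fun Z hZ hZS => ?_
    exact hb Z fun h => hZS (eq_of_subset_of_card_le (mem_filter.mp hZ).2 (by omega)).symm
  obtain h | h := lt_or_gt_of_ne hS
  · exact upperSum_eq_zero_of_card_lt hb hbelow h
  · exact sum_eq_zero fun Z hZ => hb Z fun h' => by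
      have := card_le_card (mem_filter.mp hZ).2
      omega

end UpperSum

lemma dotProduct_mulVec_eq_sum_sum {m o R : Type*} [Fintype m] [Fintype o]
    [NonUnitalSemiring R] (c : m → R) (A : Matrix m o R) (b : o → R) :
    c ⬝ᵥ A *ᵥ b = ∑ X, ∑ Z, c X * A X Z * b Z := by
  simp only [dotProduct, mulVec, mul_sum, mul_assoc]

section Mmat

variable {n : ℕ}

lemma Mmat_transpose (i j t : ℤ) : (Mmat n i j t)ᵀ = Mmat n j i t := by
  ext X Y
  simp only [transpose_apply, Mmat, of_apply, inter_comm Y X]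
  exact if_congr (by tauto) rfl rfl

lemma Mmat_apply_self_left (i j : ℕ) (X Y : Finset (Fin n)) :
    Mmat n i j i X Y = if #X = i ∧ #Y = j ∧ X ⊆ Y then 1 else 0 := by
  simp only [Mmat, of_apply, Nat.cast_inj]
  refine if_congr ⟨fun ⟨hX, hY, hXY⟩ => ⟨hX, hY, ?_⟩, fun ⟨hX, hY, hXY⟩ => ⟨hX, hY, ?_⟩⟩ rfl rfl
  · exact inter_eq_left.mp (eq_of_subset_of_card_le inter_subset_left (by omega))
  · rw [inter_eq_left.mpr hXY, hX]

lemma Mmat_apply_self_right (i j : ℕ) (X Y : Finset (Fin n)) :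
    Mmat n i j j X Y = if #X = i ∧ #Y = j ∧ Y ⊆ X then 1 else 0 := by
  rw [← Mmat_transpose, transpose_apply, Mmat_apply_self_left]
  exact if_congr (by tauto) rfl rfl

lemma Mmat_mul_Mmat_of_ne {i j : ℤ} (hij : i ≠ j) (a b t u : ℤ) :
    Mmat n a i t * Mmat n j b u = 0 := by
  ext X Z
  rw [mul_apply, Matrix.zero_apply]
  refine sum_eq_zero fun Y _ => ?_
  simp only [Mmat, of_apply]
  split_ifs with h₁ h₂
  · exact absurd (h₁.2.1.symm.trans h₂.1) hij
  all_goals simp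

lemma Mmat_mulVec_apply {i j : ℕ} {b : Finset (Fin n) → ℝ} (hb : ∀ Z, #Z ≠ j → b Z = 0)
    {X : Finset (Fin n)} (hX : #X = i) : (Mmat n i j i *ᵥ b) X = upperSum b X := by
  simp only [mulVec, dotProduct, Mmat_apply_self_left, upperSum, sum_filter, hX, true_and]
  refine sum_congr rfl fun Z _ => ?_
  by_cases hXZ : X ⊆ Z <;> by_cases hZ : #Z = j <;> simp [hXZ, hZ, hb]

theorem upperSum_of_mem_Lset {k : ℕ} {b : Finset (Fin n) → ℝ} (hb : b ∈ Lset n k)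
    (S : Finset (Fin n)) : upperSum b S = if #S = k then b S else 0 := by
  refine upperSum_eq_ite hb.2 (fun T hT => ?_) S
  have h := congrFun hb.1 T
  rwa [show (k : ℤ) - 1 = ((#T : ℕ) : ℤ) by omega, Mmat_mulVec_apply hb.2 rfl] at h

lemma Mmat_mul_Mmat_apply {l i k : ℕ} {X Z : Finset (Fin n)} (hX : #X = l) (hZ : #Z = k) :
    (Mmat n l i l * Mmat n i k k) X Z = zchoose (n - #(X ∪ Z)) (i - #(X ∪ Z)) := by
  have hcount := card_filter_superset_card_eq (X ∪ Z) i
  rw [Fintype.card_fin] at hcount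
  rw [mul_apply, ← hcount, card_filter]
  push_cast
  refine sum_congr rfl fun Y _ => ?_
  simp only [Mmat_apply_self_left, Mmat_apply_self_right, hX, hZ, union_subset_iff, true_and]
  by_cases hY : #Y = i <;> by_cases hXY : X ⊆ Y <;> by_cases hZY : Z ⊆ Y <;> simp [hY, hXY, hZY]

lemma Mmat_mul_Mmat_apply_eq_sum {l i k : ℕ} (hlk : l + k ≤ n) {X Z : Finset (Fin n)}
    (hX : #X = l) (hZ : #Z = k) :
    (Mmat n l i l * Mmat n i k k) X Z =
      ∑ s ∈ range (n + 1), ((#(X ∩ Z)).choose s : ℝ) * zchoose (n - l - k) (i - l - k + s) := by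
  have hm : #(X ∩ Z) ≤ n := (card_le_univ _).trans (by simp)
  have hunion := card_union_add_card_inter X Z
  rw [Mmat_mul_Mmat_apply hX hZ,
    show (n : ℤ) - #(X ∪ Z) = ((n - l - k : ℕ) : ℤ) + #(X ∩ Z) by omega,
    show (i : ℤ) - #(X ∪ Z) = (i - l - k) + #(X ∩ Z) by omega, zchoose_add_add_eq_sum,
    Nat.cast_sub (by omega), Nat.cast_sub (by omega : l ≤ n)]
  refine sum_subset (range_subset_range.mpr (by omega)) fun s _ hs => ?_
  rw [Nat.choose_eq_zero_of_lt (by simpa using hs), Nat.cast_zero, zero_mul]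

lemma sum_upperSum_mul_upperSum_of_mem_Lset {l k : ℕ} {c b : Finset (Fin n) → ℝ}
    (hc : c ∈ Lset n l) (hb : b ∈ Lset n k) (s : ℕ) :
    ∑ S with #S = s, upperSum c S * upperSum b S = if s = l ∧ s = k then c ⬝ᵥ b else 0 := by
  simp only [upperSum_of_mem_Lset hc, upperSum_of_mem_Lset hb]
  split_ifs with h
  · obtain ⟨rfl, rfl⟩ := h
    rw [sum_filter, dotProduct]
    refine sum_congr rfl fun S _ => ?_
    by_cases hS : #S = s
    · simp only [hS, if_true]
    · rw [if_neg hS, hc.2 S hS, zero_mul]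
  · refine sum_eq_zero fun S hS => ?_
    rw [(mem_filter.mp hS).2]
    split_ifs <;> simp_all

theorem dotProduct_Mmat_mul_Mmat_mulVec {l i k : ℕ} (hlk : l + k ≤ n)
    {c b : Finset (Fin n) → ℝ} (hc : c ∈ Lset n l) (hb : b ∈ Lset n k) :
    c ⬝ᵥ (Mmat n l i l * Mmat n i k k) *ᵥ b =
      ∑ s ∈ range (n + 1),
        zchoose (n - l - k) (i - l - k + s) * if s = l ∧ s = k then c ⬝ᵥ b else 0 := by
  have hentry : ∀ X Z, c X * (Mmat n l i l * Mmat n i k k) X Z * b Z =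
      ∑ s ∈ range (n + 1),
        zchoose (n - l - k) (i - l - k + s) * (c X * b Z * (#(X ∩ Z)).choose s) := by
    intro X Z
    by_cases hX : #X = l
    swap
    · simp [hc.2 X hX]
    by_cases hZ : #Z = k
    swap
    · simp [hb.2 Z hZ]
    rw [Mmat_mul_Mmat_apply_eq_sum hlk hX hZ, mul_sum, sum_mul]
    exact sum_congr rfl fun s _ => by ring
  rw [dotProduct_mulVec_eq_sum_sum]
  simp only [hentry]
  rw [sum_congr rfl fun X _ => sum_comm, sum_comm]
  simp only [← mul_sum, sum_sum_mul_choose_card_inter, sum_upperSum_mul_upperSum_of_mem_Lset hc hb]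

end Mmat

theorem statement13_general (n : ℕ) (i j k l : ℕ)
    (hk : k ≤ n / 2) (hl : l ≤ n / 2)
    (c b : Finset (Fin n) → ℝ) (hc : c ∈ Lset n l) (hb : b ∈ Lset n k) :
    c ⬝ᵥ ((Mmat n (l : ℤ) (i : ℤ) (l : ℤ) * Mmat n (j : ℤ) (k : ℤ) (k : ℤ)) *ᵥ b)
      = if l = k ∧ i = j then zchoose ((n : ℤ) - 2 * k) ((i : ℤ) - k) * (c ⬝ᵥ b)
        else 0 := by
  obtain rfl | hij := eq_or_ne i j
  swap
  · rw [if_neg fun h => hij h.2, Mmat_mul_Mmat_of_ne (by exact_mod_cast hij), zero_mulVec,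
      dotProduct_zero]
  rw [dotProduct_Mmat_mul_Mmat_mulVec (by omega) hc hb]
  split_ifs with hlk
  · obtain ⟨rfl, -⟩ := hlk
    rw [sum_eq_single_of_mem l (mem_range.mpr (by omega)) fun s _ hs => by simp [hs],
      if_pos ⟨rfl, rfl⟩]
    ring_nf
  · exact sum_eq_zero fun s _ => by rw [if_neg (by omega), mul_zero]

/-- for `i, j, k, l ∈ {0,…,n}` with `k, l ≤ ⌊n/2⌋`, `c ∈ L_l` and `b ∈ L_k`,
`cᵀ·M_{l,i}^l·M_{j,k}^k·b = C(n−2k, i−k)·(cᵀb)` if `l = k` and `i = j`, and `= 0`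
otherwise. -/
theorem statement13 (n : ℕ) (hn : 1 ≤ n) (i j k l : ℕ)
    (hi : i ≤ n) (hj : j ≤ n) (hk : k ≤ n / 2) (hl : l ≤ n / 2)
    (c b : Finset (Fin n) → ℝ) (hc : c ∈ Lset n l) (hb : b ∈ Lset n k) :
    c ⬝ᵥ ((Mmat n (l : ℤ) (i : ℤ) (l : ℤ) * Mmat n (j : ℤ) (k : ℤ) (k : ℤ)) *ᵥ b)
      = if l = k ∧ i = j then zchoose ((n : ℤ) - 2 * k) ((i : ℤ) - k) * (c ⬝ᵥ b)
        else 0 :=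
  statement13_general n i j k l hk hl c b hc hb
end

section
/- Fix integers q ≥ 2 and n ≥ 1 and define the Krawtchouk values K_j(i) := Σ_{k=0}^{j} (−1)^k C(i,k) C(n−i, j−k) (q−1)^{j−k}. Then for every finite set C of words u : {1,…,n} → {0,…,q−1} and every j = 0, …, n: Σ_{u ∈ C} Σ_{v ∈ C} K_j(d(u,v)) ≥ 0, where d denotes Hamming distance. Equivalently, for nonempty C the distance distribution x_i := |{(u,v) ∈ C×C : d(u,v) = i}| / |C| satisfies Σ_{i=0}^{n} x_i·K_j(i) ≥ 0 for all j. -/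
/-!
Delsarte's inequalities via characters. Let `ζ` be a primitive `q`-th root of unity and
`χ_z(u) = ζ ^ ⟨u, z⟩`. Summing `χ_z(u) / χ_z(v)` over the words `z` of weight `j` gives the
coefficient of `X ^ j` in `∏_h Σ_a (ζ^{u_h} / ζ^{v_h})^a X^{[a ≠ 0]}`; each factor is
`1 + (q - 1) X` or `1 - X` according as `u_h = v_h`, so the coefficient is
`K_j(d(u, v))`. Hence `Σ_{u,v ∈ C} K_j(d(u, v)) = Σ_{wt z = j} |Σ_{u ∈ C} χ_z(u)|² ≥ 0`.
-/

/-- The Krawtchouk value `K_j(i) = Σ_{k=0}^{j} (−1)^k C(i,k) C(n−i, j−k) (q−1)^{j−k}`. -/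
def krawtchouk (q n j i : ℕ) : ℝ :=
  ∑ k ∈ Finset.range (j + 1),
    (-1 : ℝ) ^ k * (i.choose k : ℝ) * ((n - i).choose (j - k) : ℝ) * ((q : ℝ) - 1) ^ (j - k)

open Finset Polynomial ComplexConjugate

section Polynomial

variable {R : Type*} [CommSemiring R]

theorem coeff_one_add_C_mul_X_pow (a : R) (m k : ℕ) :
    ((1 + C a * X) ^ m).coeff k = a ^ k * m.choose k := by
  have hcomp : (1 + C a * X) ^ m = ((1 + X) ^ m).comp (C a * X) := by
    simp [add_comp]
  rw [hcomp, comp_C_mul_X_coeff, coeff_one_add_X_pow, mul_comm]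

theorem coeff_one_add_C_mul_X_pow_mul (a b : R) (i m j : ℕ) :
    ((1 + C a * X) ^ i * (1 + C b * X) ^ m).coeff j =
      ∑ k ∈ range (j + 1), a ^ k * i.choose k * (b ^ (j - k) * m.choose (j - k)) := by
  rw [coeff_mul, Nat.sum_antidiagonal_eq_sum_range_succ_mk]
  simp only [coeff_one_add_C_mul_X_pow]

theorem coeff_sum_C_mul_X_pow {β : Type*} (s : Finset β) (c : β → R) (e : β → ℕ) (j : ℕ) :
    (∑ b ∈ s, C (c b) * X ^ e b).coeff j = ∑ b ∈ s with e b = j, c b := by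
  simp [sum_filter, eq_comm]

variable {ι α : Type*} [Fintype ι] [DecidableEq ι] [Fintype α] [DecidableEq α] [Zero α]

theorem sum_C_prod_mul_X_pow_hammingNorm (f : ι → α → R) :
    ∑ x : ι → α, C (∏ i, f i (x i)) * X ^ hammingNorm x =
      ∏ i, (C (f i 0) + C (∑ a ∈ univ.erase 0, f i a) * X) := by
  have hfactor : ∀ i, C (f i 0) + C (∑ a ∈ univ.erase 0, f i a) * X =
      ∑ a, C (f i a) * if a = 0 then 1 else X := by
    intro i
    rw [← add_sum_erase _ _ (mem_univ 0), if_pos rfl, mul_one, map_sum, sum_mul]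
    congr 1
    exact sum_congr rfl fun a ha => by rw [if_neg (ne_of_mem_erase ha)]
  simp_rw [hfactor, Fintype.prod_sum, prod_mul_distrib, prod_ite, prod_const_one, prod_const,
    one_mul, map_prod]
  rfl

end Polynomial

/-- The character `u ↦ ζ ^ ⟨u, z⟩` of `(ℤ/q)^ι`, with the letters of `Fin q` read as integers. -/
def wordChar {M ι : Type*} [CommMonoid M] [Fintype ι] {q : ℕ} (ζ : M) (z u : ι → Fin q) : M :=
  ∏ h, ζ ^ ((u h : ℕ) * (z h : ℕ))

section RootsOfUnity

variable {K : Type*} [Field K] {q : ℕ} [NeZero q] {ζ : K}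

theorem IsPrimitiveRoot.sum_fin_pow_div_pow (hζ : IsPrimitiveRoot ζ q) (x y : Fin q) :
    ∑ a : Fin q, (ζ ^ (x : ℕ) / ζ ^ (y : ℕ)) ^ (a : ℕ) = if x = y then (q : K) else 0 := by
  have hζ0 : ∀ k : ℕ, ζ ^ k ≠ 0 := fun k => pow_ne_zero k (hζ.ne_zero (NeZero.ne q))
  rw [Fin.sum_univ_eq_sum_range (fun a => (ζ ^ (x : ℕ) / ζ ^ (y : ℕ)) ^ a)]
  split_ifs with hxy
  · simp [hxy, div_self (hζ0 _)]
  · have hne : ζ ^ (x : ℕ) / ζ ^ (y : ℕ) ≠ 1 := fun h =>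
      hxy (Fin.ext (hζ.pow_inj x.isLt y.isLt ((div_eq_one_iff_eq (hζ0 _)).mp h)))
    rw [geom_sum_eq hne, div_pow, ← pow_mul, ← pow_mul, mul_comm, pow_mul, mul_comm (y : ℕ),
      pow_mul, hζ.pow_eq_one]
    simp

theorem IsPrimitiveRoot.sum_erase_zero_pow_div_pow (hζ : IsPrimitiveRoot ζ q) (x y : Fin q) :
    ∑ a ∈ univ.erase (0 : Fin q), (ζ ^ (x : ℕ) / ζ ^ (y : ℕ)) ^ (a : ℕ) =
      if x = y then (q : K) - 1 else -1 := by
  rw [sum_erase_eq_sub (mem_univ 0), hζ.sum_fin_pow_div_pow]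
  split_ifs <;> simp

variable {ι : Type*} [Fintype ι] [DecidableEq ι]

theorem IsPrimitiveRoot.sum_wordChar_div_wordChar (hζ : IsPrimitiveRoot ζ q) (u v : ι → Fin q)
    (j : ℕ) :
    ∑ z : ι → Fin q with hammingNorm z = j, wordChar ζ z u / wordChar ζ z v =
      ∑ k ∈ range (j + 1), (-1) ^ k * (hammingDist u v).choose k *
        (((q : K) - 1) ^ (j - k) * (Fintype.card ι - hammingDist u v).choose (j - k)) := by
  have hchar : ∀ z : ι → Fin q, wordChar ζ z u / wordChar ζ z v =
      ∏ h, (ζ ^ (u h : ℕ) / ζ ^ (v h : ℕ)) ^ (z h : ℕ) := by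
    intro z
    rw [wordChar, wordChar, ← prod_div_distrib]
    exact prod_congr rfl fun h _ => by rw [pow_mul, pow_mul, div_pow]
  have hagree : #{h | u h = v h} = Fintype.card ι - hammingDist u v := by
    have hsplit := card_filter_add_card_filter_not (s := univ) fun h => u h = v h
    rw [card_univ] at hsplit
    exact Nat.eq_sub_of_add_eq hsplit
  simp_rw [hchar]
  rw [← coeff_sum_C_mul_X_pow univ _ hammingNorm, sum_C_prod_mul_X_pow_hammingNorm
    fun h (a : Fin q) => (ζ ^ (u h : ℕ) / ζ ^ (v h : ℕ)) ^ (a : ℕ)]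
  have hfactor : ∀ h, C ((ζ ^ (u h : ℕ) / ζ ^ (v h : ℕ)) ^ ((0 : Fin q) : ℕ)) +
      C (∑ a ∈ univ.erase (0 : Fin q), (ζ ^ (u h : ℕ) / ζ ^ (v h : ℕ)) ^ (a : ℕ)) * X =
      if u h = v h then 1 + C ((q : K) - 1) * X else 1 + C (-1) * X := by
    intro h
    rw [hζ.sum_erase_zero_pow_div_pow, Fin.val_zero, pow_zero, map_one]
    split_ifs <;> rfl
  rw [prod_congr rfl fun h _ => hfactor h, prod_ite, prod_const, prod_const, hagree, mul_comm,
    coeff_one_add_C_mul_X_pow_mul]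
  rfl

end RootsOfUnity

theorem sum_sum_sum_mul_conj {β γ : Type*} (s : Finset β) (t : Finset γ) (f : γ → β → ℂ) :
    ∑ u ∈ s, ∑ v ∈ s, ∑ z ∈ t, f z u * conj (f z v) =
      ∑ z ∈ t, ((‖(∑ u ∈ s, f z u : ℂ)‖ ^ 2 : ℝ) : ℂ) := by
  simp_rw [Complex.ofReal_pow, ← Complex.mul_conj', map_sum, sum_mul_sum]
  exact (sum_congr rfl fun u _ => sum_comm).trans sum_comm

theorem IsPrimitiveRoot.sum_wordChar_mul_conj {q n : ℕ} [NeZero q] {ζ : ℂ}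
    (hζ : IsPrimitiveRoot ζ q) (u v : Fin n → Fin q) (j : ℕ) :
    ∑ z : Fin n → Fin q with hammingNorm z = j, wordChar ζ z u * conj (wordChar ζ z v) =
      krawtchouk q n j (hammingDist u v) := by
  have hnorm : ∀ z, ‖wordChar ζ z v‖ = 1 := by
    intro z
    simp [wordChar, norm_prod, norm_pow, hζ.norm'_eq_one (NeZero.ne q)]
  simp_rw [← Complex.inv_eq_conj (hnorm _), ← div_eq_mul_inv, hζ.sum_wordChar_div_wordChar,
    krawtchouk, Fintype.card_fin]
  push_cast
  exact sum_congr rfl fun k _ => by ring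

theorem sum_sum_krawtchouk_hammingDist_nonneg {q n : ℕ} (hq : q ≠ 0) (C : Finset (Fin n → Fin q))
    (j : ℕ) : 0 ≤ ∑ u ∈ C, ∑ v ∈ C, krawtchouk q n j (hammingDist u v) := by
  have : NeZero q := ⟨hq⟩
  obtain ⟨ζ, hζ⟩ : ∃ ζ : ℂ, IsPrimitiveRoot ζ q := ⟨_, Complex.isPrimitiveRoot_exp q hq⟩
  have hgram : ((∑ u ∈ C, ∑ v ∈ C, krawtchouk q n j (hammingDist u v) : ℝ) : ℂ) =
      ∑ z : Fin n → Fin q with hammingNorm z = j, ((‖∑ u ∈ C, wordChar ζ z u‖ ^ 2 : ℝ) : ℂ) := by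
    simp_rw [Complex.ofReal_sum, ← hζ.sum_wordChar_mul_conj, sum_sum_sum_mul_conj]
  rw [← Complex.ofReal_sum, Complex.ofReal_inj] at hgram
  rw [hgram]
  positivity

theorem sum_range_card_filter_hammingDist_mul {ι β : Type*} [Fintype ι] [DecidableEq ι]
    [DecidableEq β] (C : Finset (ι → β)) (f : ℕ → ℝ) :
    ∑ i ∈ range (Fintype.card ι + 1),
        (((C ×ˢ C).filter fun p => hammingDist p.1 p.2 = i).card : ℝ) * f i =
      ∑ u ∈ C, ∑ v ∈ C, f (hammingDist u v) := by
  have hmaps : ∀ p ∈ C ×ˢ C, hammingDist p.1 p.2 ∈ range (Fintype.card ι + 1) :=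
    fun p _ => mem_range_succ_iff.mpr hammingDist_le_card_fintype
  rw [← sum_product', ← sum_fiberwise_of_maps_to hmaps]
  refine sum_congr rfl fun i _ => ?_
  rw [sum_congr rfl fun p hp => by rw [(mem_filter.mp hp).2], sum_const, nsmul_eq_mul]

theorem statement18_general (q n : ℕ) (hq : 2 ≤ q) (C : Finset (Fin n → Fin q)) :
    (∀ j ≤ n, 0 ≤ ∑ u ∈ C, ∑ v ∈ C, krawtchouk q n j (hammingDist u v)) ∧
    (C.Nonempty → ∀ j ≤ n,
      0 ≤ ∑ i ∈ Finset.range (n + 1),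
            ((((C ×ˢ C).filter fun p => hammingDist p.1 p.2 = i).card : ℝ) / (C.card : ℝ)) *
              krawtchouk q n j i) := by
  have hpos : ∀ j, 0 ≤ ∑ u ∈ C, ∑ v ∈ C, krawtchouk q n j (hammingDist u v) :=
    sum_sum_krawtchouk_hammingDist_nonneg (by omega) C
  refine ⟨fun j _ => hpos j, fun _ j _ => ?_⟩
  have hdist := sum_range_card_filter_hammingDist_mul C (krawtchouk q n j)
  rw [Fintype.card_fin] at hdist
  simp_rw [div_mul_eq_mul_div, ← sum_div, hdist]
  exact div_nonneg (hpos j) (Nat.cast_nonneg _)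

/-- for every finite code `C` and every `j = 0,…,n` one has
`Σ_{u∈C} Σ_{v∈C} K_j(d(u,v)) ≥ 0`; equivalently, for nonempty `C` the distance
distribution `x_i := |{(u,v) ∈ C×C : d(u,v) = i}| / |C|` satisfies
`Σ_i x_i K_j(i) ≥ 0` for all `j`. -/
theorem statement18 (q n : ℕ) (hq : 2 ≤ q) (hn : 1 ≤ n) (C : Finset (Fin n → Fin q)) :
    (∀ j ≤ n, 0 ≤ ∑ u ∈ C, ∑ v ∈ C, krawtchouk q n j (hammingDist u v)) ∧
    (C.Nonempty → ∀ j ≤ n,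
      0 ≤ ∑ i ∈ Finset.range (n + 1),
            ((((C ×ˢ C).filter fun p => hammingDist p.1 p.2 = i).card : ℝ) / (C.card : ℝ)) *
              krawtchouk q n j i) :=
  statement18_general q n hq C
end
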